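/- arXiv:2010.01777 — 6 statements merged into one kernel-verified Lean document; each statement's English description precedes it below -/
import Mathlib

section
/- Let Ã be an N×N real matrix, let α ∈ (0,1), set c = 1/α − 1, and set L = I − Ã. Then I + c·L = (1/α)·(I − (1−α)·Ã). Consequently, if I − (1−α)·Ã is invertible, then I + c·L is invertible and for every S ∈ ℝ^{N×d}, (I + c·L)⁻¹ S = α·(I − (1−α)·Ã)⁻¹ S; that is, the PPNP feature aggregation H = α(I − (1−α)Ã)⁻¹ S coincides with the closed-form solution (I + cL)⁻¹S of the graph signal denoising problem with input noisy signal S and c = 1/α − 1. -/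
open Matrix

/-- Let `Atil` be an `N×N` real matrix, `α ∈ (0,1)`, `c = 1/α − 1`, and
`L = I − Atil`. Then `I + c·L = (1/α)·(I − (1−α)·Atil)`. Consequently, if `I − (1−α)·Atil` is
invertible, then so is `I + c·L`, and for every `S ∈ ℝ^{N×d}`,
`(I + c·L)⁻¹ S = α·(I − (1−α)·Atil)⁻¹ S`; that is, the PPNP feature aggregation coincides
with the closed-form solution of the graph signal denoising problem with `c = 1/α − 1`. -/
theorem stmt_4 {N d : ℕ} (Atil : Matrix (Fin N) (Fin N) ℝ)
    (α : ℝ) (hα : α ∈ Set.Ioo (0 : ℝ) 1)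
    (c : ℝ) (hc : c = 1 / α - 1)
    (L : Matrix (Fin N) (Fin N) ℝ) (hL : L = 1 - Atil) :
    1 + c • L = (1 / α) • (1 - (1 - α) • Atil) ∧
    (IsUnit (1 - (1 - α) • Atil) →
      IsUnit (1 + c • L) ∧
      ∀ S : Matrix (Fin N) (Fin d) ℝ,
        (1 + c • L)⁻¹ * S = α • ((1 - (1 - α) • Atil)⁻¹ * S)) := by
  obtain ⟨hα0, hα1⟩ := hα
  have hαne : α ≠ 0 := ne_of_gt hα0
  have hne : (1 / α : ℝ) ≠ 0 := by positivity
  have heq : 1 + c • L = (1 / α) • (1 - (1 - α) • Atil) := by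
    subst hc hL
    ext i j
    simp only [Matrix.add_apply, Matrix.smul_apply, Matrix.sub_apply, Matrix.one_apply,
      smul_eq_mul]
    split <;> field_simp <;> ring
  refine ⟨heq, fun hU => ?_⟩
  have hdet : IsUnit (1 - (1 - α) • Atil).det := (Matrix.isUnit_iff_isUnit_det _).mp hU
  have hinv : Invertible (1 / α : ℝ) := invertibleOfNonzero hne
  have hU' : IsUnit (1 + c • L) := by
    rw [heq]
    rw [Matrix.isUnit_iff_isUnit_det, Matrix.det_smul]
    exact ((isUnit_iff_ne_zero.mpr hne).pow _).mul hdet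
  refine ⟨hU', fun S => ?_⟩
  have hio : ⅟(1 / α : ℝ) = α := by simp [invOf_eq_inv, one_div]
  rw [heq, Matrix.inv_smul _ _ hdet, Matrix.smul_mul, hio]
end

section
/- Let A be a symmetric 0/1 adjacency matrix of a simple undirected graph on N nodes (zero diagonal), let Â = A + I, D̂ the diagonal matrix with D̂_ii = Σ_j Â_ij, and Ã = D̂^{-1/2} Â D̂^{-1/2}. For every α ∈ (0,1), the matrix I − (1−α)Ã is invertible, and for every S ∈ ℝ^{N×d}, the matrix α(I − (1−α)Ã)⁻¹S is the unique global minimizer of the graph signal denoising objective 𝓛(F) = ‖F − S‖_F² + c · tr(Fᵀ(I − Ã)F) with c = 1/α − 1. -/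
open Matrix BigOperators

/-- The graph signal denoising objective
`𝓛(F) = ‖F − S‖_F² + c · tr(Fᵀ L F)`, where the squared Frobenius norm is
expressed as `tr((F - S)ᵀ (F - S))`. -/
noncomputable def denoisingObjective {N d : ℕ} (L : Matrix (Fin N) (Fin N) ℝ)
    (S : Matrix (Fin N) (Fin d) ℝ) (c : ℝ) (F : Matrix (Fin N) (Fin d) ℝ) : ℝ :=
  Matrix.trace ((F - S)ᵀ * (F - S)) + c * Matrix.trace (Fᵀ * L * F)

/-- Quadratic expansion of the denoising objective around the stationary point. -/
lemma stmt6_quad_identity {N d : ℕ} (L : Matrix (Fin N) (Fin N) ℝ) (hL : Lᵀ = L)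
    (c : ℝ) (Fs F : Matrix (Fin N) (Fin d) ℝ) :
    denoisingObjective L ((1 + c • L) * Fs) c F
      = Matrix.trace ((F - Fs)ᵀ * (1 + c • L) * (F - Fs))
        + (Matrix.trace (((1 + c • L) * Fs)ᵀ * ((1 + c • L) * Fs))
            - Matrix.trace (Fsᵀ * (1 + c • L) * Fs)) := by
  unfold denoisingObjective
  simp only [Matrix.transpose_sub, Matrix.transpose_mul, Matrix.transpose_add,
    Matrix.transpose_smul, Matrix.transpose_one, hL,
    Matrix.sub_mul, Matrix.mul_sub, Matrix.add_mul, Matrix.mul_add,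
    Matrix.smul_mul, Matrix.mul_smul, Matrix.one_mul, Matrix.mul_one,
    Matrix.trace_sub, Matrix.trace_add, Matrix.trace_smul, smul_eq_mul,
    Matrix.mul_assoc]
  ring

lemma stmt6_trace_quad {N d : ℕ} (M : Matrix (Fin N) (Fin N) ℝ)
    (G : Matrix (Fin N) (Fin d) ℝ) :
    Matrix.trace (Gᵀ * M * G) = ∑ j, (fun i => G i j) ⬝ᵥ (M *ᵥ fun i => G i j) := by
  simp only [Matrix.trace, Matrix.diag, Matrix.mul_apply, Matrix.transpose_apply,
    dotProduct, Matrix.mulVec, Finset.sum_mul, Finset.mul_sum]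
  refine Finset.sum_congr rfl fun j _ => ?_
  rw [Finset.sum_comm]
  exact Finset.sum_congr rfl fun i _ => Finset.sum_congr rfl fun k _ => by ring

lemma stmt6_trace_quad_nonneg {N d : ℕ} {M : Matrix (Fin N) (Fin N) ℝ} (hM : M.PosSemidef)
    (G : Matrix (Fin N) (Fin d) ℝ) : 0 ≤ Matrix.trace (Gᵀ * M * G) := by
  rw [stmt6_trace_quad]
  refine Finset.sum_nonneg fun j _ => ?_
  simpa using hM.dotProduct_mulVec_nonneg (fun i => G i j)

lemma stmt6_trace_quad_pos {N d : ℕ} {M : Matrix (Fin N) (Fin N) ℝ} (hM : M.PosDef)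
    {G : Matrix (Fin N) (Fin d) ℝ} (hG : G ≠ 0) : 0 < Matrix.trace (Gᵀ * M * G) := by
  rw [stmt6_trace_quad]
  obtain ⟨i, j, hij⟩ : ∃ i j, G i j ≠ 0 := by
    by_contra h
    push_neg at h
    exact hG (by ext i j; simpa using h i j)
  refine Finset.sum_pos' (fun j _ => by simpa using hM.posSemidef.dotProduct_mulVec_nonneg (fun i => G i j))
    ⟨j, Finset.mem_univ j, ?_⟩
  have hx : (fun i => G i j) ≠ 0 := fun h => hij (by simpa using congrFun h i)
  simpa using hM.dotProduct_mulVec_pos hx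

/-- Let `A` be the symmetric 0/1 adjacency matrix of a simple undirected
graph on `N` nodes (zero diagonal), `Â = A + I`, `D̂` the diagonal degree matrix of `Â`,
and `Atil = D̂^{-1/2} Â D̂^{-1/2}`.  For every `α ∈ (0,1)`, the matrix `I − (1−α)·Atil`
is invertible, and for every `S ∈ ℝ^{N×d}`, `α·(I − (1−α)·Atil)⁻¹ S` is the unique
global minimizer of `𝓛(F) = ‖F − S‖_F² + c·tr(Fᵀ(I − Atil)F)` with `c = 1/α − 1`. -/
theorem stmt_6 {N d : ℕ} (A : Matrix (Fin N) (Fin N) ℝ)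
    (hsymm : A.IsSymm) (h01 : ∀ i j, A i j = 0 ∨ A i j = 1) (hdiag : ∀ i, A i i = 0)
    (Ahat : Matrix (Fin N) (Fin N) ℝ) (hAhat : Ahat = A + 1)
    (deg : Fin N → ℝ) (hdeg : ∀ i, deg i = ∑ j, Ahat i j)
    (Atil : Matrix (Fin N) (Fin N) ℝ)
    (hAtil : Atil =
      Matrix.diagonal (fun i => (Real.sqrt (deg i))⁻¹) * Ahat *
        Matrix.diagonal (fun i => (Real.sqrt (deg i))⁻¹))
    (α : ℝ) (hα : α ∈ Set.Ioo (0 : ℝ) 1) (c : ℝ) (hc : c = 1 / α - 1) :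
    IsUnit (1 - (1 - α) • Atil) ∧
    ∀ S : Matrix (Fin N) (Fin d) ℝ,
      (∀ F : Matrix (Fin N) (Fin d) ℝ,
          denoisingObjective (1 - Atil) S c (α • ((1 - (1 - α) • Atil)⁻¹ * S))
            ≤ denoisingObjective (1 - Atil) S c F) ∧
      (∀ F : Matrix (Fin N) (Fin d) ℝ, F ≠ α • ((1 - (1 - α) • Atil)⁻¹ * S) →
          denoisingObjective (1 - Atil) S c (α • ((1 - (1 - α) • Atil)⁻¹ * S))
            < denoisingObjective (1 - Atil) S c F) := by
  obtain ⟨hα0, hα1⟩ := hα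
  have hc0 : 0 < c := by
    rw [hc]
    have h1 : 1 < 1 / α := by rw [lt_div_iff₀ hα0]; linarith
    linarith
  -- basic positivity facts
  have hA0 : ∀ i j, 0 ≤ A i j := fun i j => by rcases h01 i j with h | h <;> simp [h]
  have hAhs : ∀ i j, Ahat i j = Ahat j i := by
    intro i j
    simp [hAhat, Matrix.add_apply, Matrix.one_apply, ← hsymm.apply i j, eq_comm]
  have hAh0 : ∀ i j, 0 ≤ Ahat i j := by
    intro i j
    simp only [hAhat, Matrix.add_apply, Matrix.one_apply]
    have := hA0 i j; positivity
  have hdegpos : ∀ i, 0 < deg i := by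
    intro i
    rw [hdeg i]
    have h1 : (1:ℝ) ≤ ∑ j, Ahat i j := by
      calc (1:ℝ) = Ahat i i := by simp [hAhat, hdiag i]
      _ ≤ ∑ j, Ahat i j :=
        Finset.single_le_sum (fun j _ => hAh0 i j) (Finset.mem_univ i)
    linarith
  set D : Matrix (Fin N) (Fin N) ℝ := Matrix.diagonal (fun i => (Real.sqrt (deg i))⁻¹) with hD
  set Q : Matrix (Fin N) (Fin N) ℝ := Matrix.diagonal deg - Ahat with hQ
  -- the combinatorial Laplacian is PSD
  have hQpsd : Q.PosSemidef := by
    refine Matrix.PosSemidef.of_dotProduct_mulVec_nonneg ?_ ?_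
    · ext i j
      simp only [hQ, Matrix.conjTranspose_apply, Matrix.sub_apply, Matrix.diagonal_apply,
        star_trivial, hAhs j i]
      rcases eq_or_ne i j with rfl | h
      · rfl
      · simp [h, Ne.symm h]
    · intro x
      have key : (star x) ⬝ᵥ (Q *ᵥ x) * 2 = ∑ i, ∑ k, Ahat i k * (x i - x k)^2 := by
        have e1 : (star x) ⬝ᵥ (Q *ᵥ x) = ∑ i, ∑ k, Ahat i k * (x i * x i - x i * x k) := by
          rw [hQ, Matrix.sub_mulVec, dotProduct_sub]
          have t1 : (star x) ⬝ᵥ (Matrix.diagonal deg *ᵥ x)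
              = ∑ i, ∑ k, Ahat i k * (x i * x i) := by
            simp only [dotProduct, Matrix.mulVec_diagonal, star_trivial]
            refine Finset.sum_congr rfl fun i _ => ?_
            rw [hdeg i, Finset.sum_mul, Finset.mul_sum]
            exact Finset.sum_congr rfl fun k _ => by ring
          have t2 : (star x) ⬝ᵥ (Ahat *ᵥ x) = ∑ i, ∑ k, Ahat i k * (x i * x k) := by
            simp only [dotProduct, Matrix.mulVec, star_trivial]
            refine Finset.sum_congr rfl fun i _ => ?_
            rw [Finset.mul_sum]
            exact Finset.sum_congr rfl fun k _ => by ring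
          rw [t1, t2, ← Finset.sum_sub_distrib]
          refine Finset.sum_congr rfl fun i _ => ?_
          rw [← Finset.sum_sub_distrib]
          exact Finset.sum_congr rfl fun k _ => by ring
        have e2 : (star x) ⬝ᵥ (Q *ᵥ x) = ∑ i, ∑ k, Ahat i k * (x k * x k - x i * x k) := by
          rw [e1, Finset.sum_comm]
          exact Finset.sum_congr rfl fun i _ => Finset.sum_congr rfl fun k _ => by
            rw [hAhs k i]; ring
        calc (star x) ⬝ᵥ (Q *ᵥ x) * 2
            = (∑ i, ∑ k, Ahat i k * (x i * x i - x i * x k))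
              + ∑ i, ∑ k, Ahat i k * (x k * x k - x i * x k) := by
              rw [← e1, ← e2]; ring
          _ = ∑ i, ∑ k, Ahat i k * (x i - x k)^2 := by
              rw [← Finset.sum_add_distrib]
              refine Finset.sum_congr rfl fun i _ => ?_
              rw [← Finset.sum_add_distrib]
              exact Finset.sum_congr rfl fun k _ => by ring
      have hnn : 0 ≤ (star x) ⬝ᵥ (Q *ᵥ x) * 2 := by
        rw [key]
        refine Finset.sum_nonneg fun i _ => Finset.sum_nonneg fun k _ => ?_
        exact mul_nonneg (hAh0 i k) (sq_nonneg _)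
      linarith
  have hDQD : 1 - Atil = D * Q * D := by
    have h1 : D * Matrix.diagonal deg * D = 1 := by
      rw [hD, Matrix.diagonal_mul_diagonal, Matrix.diagonal_mul_diagonal]
      ext i j
      rcases eq_or_ne i j with rfl | h
      · have hp := hdegpos i
        have hs : Real.sqrt (deg i) ≠ 0 := (Real.sqrt_pos.mpr hp).ne'
        simp only [Matrix.diagonal_apply_eq, Matrix.one_apply_eq]
        field_simp
        rw [Real.sq_sqrt hp.le]
      · simp [Matrix.diagonal_apply_ne _ h, Matrix.one_apply_ne h]
    rw [hQ, Matrix.mul_sub, Matrix.sub_mul, h1, hAtil, hD]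
  have hDH : Dᴴ = D := by
    ext i j
    simp only [hD, Matrix.conjTranspose_apply, Matrix.diagonal_apply, star_trivial]
    rcases eq_or_ne i j with rfl | h
    · rfl
    · simp [h, Ne.symm h]
  have hLpsd : (1 - Atil).PosSemidef := by
    rw [hDQD]
    have := hQpsd.mul_mul_conjTranspose_same D
    rwa [hDH] at this
  have hLsymm : (1 - Atil)ᵀ = 1 - Atil := by
    have h := hLpsd.1
    rw [Matrix.IsHermitian] at h
    calc (1 - Atil)ᵀ = (1 - Atil)ᴴ := by ext i j; simp [Matrix.conjTranspose_apply]
    _ = 1 - Atil := h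
  -- the matrix M
  set M : Matrix (Fin N) (Fin N) ℝ := 1 + c • (1 - Atil) with hM
  have hcLpsd : (c • (1 - Atil)).PosSemidef := by
    refine Matrix.PosSemidef.of_dotProduct_mulVec_nonneg ?_ ?_
    · rw [Matrix.IsHermitian, Matrix.conjTranspose_smul, hLpsd.1, star_trivial]
    · intro x
      rw [Matrix.smul_mulVec, dotProduct_smul, smul_eq_mul]
      exact mul_nonneg hc0.le (hLpsd.dotProduct_mulVec_nonneg x)
  have hMpd : M.PosDef := by
    rw [hM]
    exact Matrix.PosDef.add_posSemidef Matrix.PosDef.one hcLpsd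
  have hMsymm : Mᵀ = M := by
    rw [hM]
    simp [Matrix.transpose_smul, hLsymm]
  have hMα : 1 - (1 - α) • Atil = α • M := by
    have hαc : α * c = 1 - α := by rw [hc]; field_simp
    rw [hM, smul_add, smul_smul, hαc, smul_sub]
    have h1 : α • (1 : Matrix (Fin N) (Fin N) ℝ) + (1 - α) • (1 : Matrix (Fin N) (Fin N) ℝ)
        = 1 := by rw [← add_smul]; norm_num
    calc 1 - (1 - α) • Atil
        = α • (1 : Matrix (Fin N) (Fin N) ℝ)
          + ((1 - α) • (1 : Matrix (Fin N) (Fin N) ℝ) - (1 - α) • Atil) := by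
          rw [← add_sub_assoc, h1]
      _ = _ := rfl
  have hαMpd : (α • M).PosDef := by
    refine Matrix.PosDef.of_dotProduct_mulVec_pos ?_ ?_
    · rw [Matrix.IsHermitian, Matrix.conjTranspose_smul, hMpd.1, star_trivial]
    · intro x hx
      rw [Matrix.smul_mulVec, dotProduct_smul, smul_eq_mul]
      exact mul_pos hα0 (hMpd.dotProduct_mulVec_pos hx)
  have hUnit : IsUnit (1 - (1 - α) • Atil) := by rw [hMα]; exact hαMpd.isUnit
  refine ⟨hUnit, fun S => ?_⟩
  -- the candidate minimizer
  set Fs : Matrix (Fin N) (Fin d) ℝ := α • ((1 - (1 - α) • Atil)⁻¹ * S) with hFs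
  have hMdet : IsUnit M.det := (Matrix.isUnit_iff_isUnit_det M).mp hMpd.isUnit
  have hMFs : M * Fs = S := by
    have : Invertible α := invertibleOfNonzero hα0.ne'
    rw [hFs, hMα, Matrix.inv_smul M α hMdet, invOf_eq_inv, Matrix.smul_mul, smul_smul,
      mul_inv_cancel₀ hα0.ne', one_smul, ← Matrix.mul_assoc, Matrix.mul_nonsing_inv M hMdet,
      Matrix.one_mul]
  have hkey : ∀ F : Matrix (Fin N) (Fin d) ℝ,
      denoisingObjective (1 - Atil) S c F
        = Matrix.trace ((F - Fs)ᵀ * M * (F - Fs))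
          + (Matrix.trace (Sᵀ * S) - Matrix.trace (Fsᵀ * M * Fs)) := by
    intro F
    have := stmt6_quad_identity (1 - Atil) hLsymm c Fs F
    rw [← hM] at this
    rw [← hMFs]
    exact this
  have hFsObj : denoisingObjective (1 - Atil) S c Fs
      = Matrix.trace (Sᵀ * S) - Matrix.trace (Fsᵀ * M * Fs) := by
    rw [hkey Fs, sub_self]
    simp
  constructor
  · intro F
    rw [hFsObj, hkey F]
    have := stmt6_trace_quad_nonneg hMpd.posSemidef (F - Fs)
    linarith
  · intro F hF
    rw [hFsObj, hkey F]
    have := stmt6_trace_quad_pos hMpd (sub_ne_zero.mpr hF)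
    linarith
end

section
/- Let Ã be an N×N real matrix, L = I − Ã, S ∈ ℝ^{N×d}, c > 0, and b > 0. One step of gradient descent on the objective 𝓛(F) = ‖F − S‖_F² + c·tr(FᵀLF) starting from F = S with stepsize b yields S − b·(2c·L·S) = (1 − 2bc)·S + 2bc·Ã·S. In particular, with stepsize b = 1/(2c), the result is exactly Ã·S, the GCN feature aggregation with input noisy signal S. -/
open Matrix

theorem Matrix.sub_smul_smul_one_sub_mul {R n m : Type*} [CommRing R] [Fintype n] [DecidableEq n]
    (A : Matrix n n R) (S : Matrix n m R) (b c : R) :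
    S - b • ((2 * c) • ((1 - A) * S)) = (1 - 2 * b * c) • S + (2 * b * c) • (A * S) := by
  rw [Matrix.sub_mul, Matrix.one_mul]
  module

theorem stmt_11_general {N d : ℕ} (Atil : Matrix (Fin N) (Fin N) ℝ)
    (L : Matrix (Fin N) (Fin N) ℝ) (hL : L = 1 - Atil)
    (S : Matrix (Fin N) (Fin d) ℝ) (c : ℝ) (hc : 0 < c) (b : ℝ) :
    (S - b • ((2 * c) • (L * S)) = (1 - 2 * b * c) • S + (2 * b * c) • (Atil * S)) ∧
    (b = 1 / (2 * c) → S - b • ((2 * c) • (L * S)) = Atil * S) := by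
  subst hL
  have step := Matrix.sub_smul_smul_one_sub_mul Atil S b c
  refine ⟨step, fun hb => ?_⟩
  have hbc : 2 * b * c = 1 := by
    rw [hb]
    field_simp
  rw [step, hbc, sub_self, zero_smul, one_smul, zero_add]

/-- One step of gradient descent on
`𝓛(F) = ‖F − S‖_F² + c·tr(Fᵀ(I − Atil)F)` starting from `F = S` with stepsize `b`
yields `S − b·(2c·L·S) = (1 − 2bc)·S + 2bc·Atil·S`; with `b = 1/(2c)` the result is
exactly `Atil·S`, the GCN feature aggregation with input noisy signal `S`. -/
theorem stmt_11 {N d : ℕ} (Atil : Matrix (Fin N) (Fin N) ℝ)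
    (L : Matrix (Fin N) (Fin N) ℝ) (hL : L = 1 - Atil)
    (S : Matrix (Fin N) (Fin d) ℝ) (c : ℝ) (hc : 0 < c) (b : ℝ) (hb : 0 < b) :
    (S - b • ((2 * c) • (L * S)) = (1 - 2 * b * c) • S + (2 * b * c) • (Atil * S)) ∧
    (b = 1 / (2 * c) → S - b • ((2 * c) • (L * S)) = Atil * S) :=
  stmt_11_general Atil L hL S c hc b
end

section
/- Let G be a finite simple undirected graph on nodes {1,…,N} with self-inclusive neighborhoods Ñ(i), let S ∈ ℝ^{N×d}, and let c_1,…,c_N > 0. For each node i set the adaptive stepsize b_i = 1 / Σ_{j∈Ñ(i)}(c_i + c_j). Then one step of per-node gradient descent starting from F = S on the objective 𝓛(F) = Σ_i ‖F_i − S_i‖₂² + (1/2)·Σ_i c_i·Σ_{j∈Ñ(i)} ‖F_i − F_j‖₂², i.e., F_i ← S_i − b_i·(∂𝓛/∂F_i)|_{F=S}, yields F_i = Σ_{j∈Ñ(i)} b_i·(c_i + c_j)·S_j. -/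
open Matrix BigOperators

/-- For the adaptive-smoothness denoising objective
`𝓛(F) = Σ_i ‖F_i − S_i‖₂² + (1/2)·Σ_i c_i·Σ_{j∈Ñ(i)} ‖F_i − F_j‖₂²` with `c_i > 0` and
adaptive stepsizes `b_i = 1 / Σ_{j∈Ñ(i)}(c_i + c_j)`, one step of per-node gradient
descent starting from `F = S`, i.e. `F_i ← S_i − b_i·(∂𝓛/∂F_i)|_{F=S}` with
`(∂𝓛/∂F_i)|_{F=S} = 2(S_i − S_i) + Σ_{j∈Ñ(i)}(c_i + c_j)(S_i − S_j)`, yields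
`F_i = Σ_{j∈Ñ(i)} b_i·(c_i + c_j)·S_j`. Here `Ñ(i) = N(i) ∪ {i}` in the simple
undirected graph `G`. -/
theorem stmt_14 {N d : ℕ} (G : SimpleGraph (Fin N)) [DecidableRel G.Adj]
    (S : Matrix (Fin N) (Fin d) ℝ) (c : Fin N → ℝ) (hc : ∀ i, 0 < c i)
    (b : Fin N → ℝ)
    (hb : ∀ i, b i = 1 / ∑ j ∈ insert i (G.neighborFinset i), (c i + c j)) :
    ∀ i k,
      S i k - b i * (2 * (S i k - S i k) +
          ∑ j ∈ insert i (G.neighborFinset i), (c i + c j) * (S i k - S j k))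
        = ∑ j ∈ insert i (G.neighborFinset i), b i * (c i + c j) * S j k := by
  intro i k
  set T := insert i (G.neighborFinset i) with hT
  have hD : (0:ℝ) < ∑ j ∈ T, (c i + c j) :=
    Finset.sum_pos (fun j _ => add_pos (hc i) (hc j)) ⟨i, Finset.mem_insert_self _ _⟩
  have hbD : b i * ∑ j ∈ T, (c i + c j) = 1 := by
    rw [hb i, one_div, inv_mul_cancel₀ hD.ne']
  have key : ∑ j ∈ T, (c i + c j) * (S i k - S j k)
      = (∑ j ∈ T, (c i + c j)) * S i k - ∑ j ∈ T, (c i + c j) * S j k := by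
    rw [Finset.sum_mul, ← Finset.sum_sub_distrib]
    exact Finset.sum_congr rfl (fun j _ => by ring)
  have hr : ∑ j ∈ T, b i * (c i + c j) * S j k = b i * ∑ j ∈ T, (c i + c j) * S j k := by
    rw [Finset.mul_sum]
    exact Finset.sum_congr rfl (fun j _ => by ring)
  rw [key, hr]
  linear_combination (-(S i k)) * hbD
end

section
/- Let G be a finite simple undirected graph on nodes {1,…,N} with self-inclusive neighborhoods Ñ(i), let d_1,…,d_N > 0 (node degrees), let S ∈ ℝ^{N×d}, and let 𝒞_1,…,𝒞_N ∈ ℝ. Define the degree-normalized adaptive objective 𝓛(F) = Σ_i ‖F_i − S_i‖₂² + (1/2)·Σ_i 𝒞_i·Σ_{j∈Ñ(i)} ‖F_i/√d_i − F_j/√d_j‖₂². Then 𝓛 is differentiable and the i-th row of its gradient (with respect to the Frobenius inner product) at F is 2(F_i − S_i) + Σ_{j∈Ñ(i)} ((𝒞_i + 𝒞_j)/√d_i)·(F_i/√d_i − F_j/√d_j). -/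
/-!
Each summand of the objective is the square of an affine functional of `F`, so the derivative
in the direction `H` is `Σ 2 (F_i − S_i)·H_i + Σ_i 𝒞_i Σ_{j∈Ñ(i)} ⟨x_i − x_j, y_i − y_j⟩` with
`x_i = F_i/√d_i`, `y_i = H_i/√d_i`. Since `j ∈ Ñ(i) ↔ i ∈ Ñ(j)`, exchanging `i` and `j` in the
`y_j`-part turns the weight `𝒞_i` into `𝒞_j`, which collects everything against `H_i` with
weight `(𝒞_i + 𝒞_j)/√d_i`.
-/

open Matrix BigOperators

attribute [local instance] Matrix.frobeniusNormedAddCommGroup Matrix.frobeniusNormedSpace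

/-- The Frobenius inner product `⟨G, H⟩ = tr(Gᵀ H)` with its first argument fixed,
as a continuous linear functional on `ℝ^{N×d}`. -/
noncomputable def frobInner {N d : ℕ} (G : Matrix (Fin N) (Fin d) ℝ) :
    Matrix (Fin N) (Fin d) ℝ →L[ℝ] ℝ :=
  LinearMap.toContinuousLinearMap
    { toFun := fun H => Matrix.trace (Gᵀ * H)
      map_add' := by intro x y; simp [Matrix.mul_add]
      map_smul' := by intro m x; simp [Matrix.mul_smul] }

/-- The degree-normalized adaptive (Ada-UGNN) denoising objective
`𝓛(F) = Σ_i ‖F_i − S_i‖₂² + (1/2)·Σ_i 𝒞_i·Σ_{j∈Ñ(i)} ‖F_i/√d_i − F_j/√d_j‖₂²`,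
where `Ñ(i) = N(i) ∪ {i}` is the self-inclusive neighborhood of node `i` and
`d_i > 0` is the degree of node `i`. -/
noncomputable def adaUgnnObjective {N d : ℕ} (G : SimpleGraph (Fin N))
    [DecidableRel G.Adj] (deg : Fin N → ℝ) (S : Matrix (Fin N) (Fin d) ℝ)
    (C : Fin N → ℝ) (F : Matrix (Fin N) (Fin d) ℝ) : ℝ :=
  (∑ i, ∑ k, (F i k - S i k) ^ 2) +
    (1 / 2) * ∑ i, C i * ∑ j ∈ insert i (G.neighborFinset i),
      ∑ k, (F i k / Real.sqrt (deg i) - F j k / Real.sqrt (deg j)) ^ 2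

theorem SimpleGraph.mem_insert_neighborFinset_comm {V : Type*} (G : SimpleGraph V)
    [Fintype V] [DecidableEq V] [DecidableRel G.Adj] {i j : V} :
    j ∈ insert i (G.neighborFinset i) ↔ i ∈ insert j (G.neighborFinset j) := by
  simp only [Finset.mem_insert, SimpleGraph.mem_neighborFinset, eq_comm, G.adj_comm]

theorem sum_mul_sum_sub_mul_sub_eq_of_symm {ι κ R : Type*} [Fintype ι] [Fintype κ]
    [CommRing R] (n : ι → Finset ι) (hn : ∀ i j, j ∈ n i ↔ i ∈ n j) (c : ι → R)
    (x y : ι → κ → R) :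
    ∑ i, c i * ∑ j ∈ n i, ∑ k, (x i k - x j k) * (y i k - y j k) =
      ∑ i, ∑ k, (∑ j ∈ n i, (c i + c j) * (x i k - x j k)) * y i k := by
  have hswap : ∑ i, ∑ j ∈ n i, ∑ k, c i * (x i k - x j k) * y j k =
      ∑ i, ∑ j ∈ n i, ∑ k, c j * (x j k - x i k) * y i k :=
    Finset.sum_comm' fun i j => by simp [hn]
  have hsplit : ∀ i, c i * ∑ j ∈ n i, ∑ k, (x i k - x j k) * (y i k - y j k) =
      ∑ j ∈ n i, ∑ k, c i * (x i k - x j k) * y i k -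
        ∑ j ∈ n i, ∑ k, c i * (x i k - x j k) * y j k := by
    intro i
    simp only [Finset.mul_sum, ← Finset.sum_sub_distrib]
    exact Finset.sum_congr rfl fun j _ => Finset.sum_congr rfl fun k _ => by ring
  rw [Finset.sum_congr rfl fun i _ => hsplit i, Finset.sum_sub_distrib, hswap,
    ← Finset.sum_sub_distrib]
  refine Finset.sum_congr rfl fun i _ => ?_
  simp only [Finset.sum_mul, ← Finset.sum_sub_distrib]
  rw [Finset.sum_comm]
  exact Finset.sum_congr rfl fun k _ => Finset.sum_congr rfl fun j _ => by ring

theorem frobInner_apply {N d : ℕ} (G H : Matrix (Fin N) (Fin d) ℝ) :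
    frobInner G H = ∑ i, ∑ k, G i k * H i k := by
  simp [frobInner, Matrix.trace, Matrix.mul_apply, Finset.sum_comm (γ := Fin N)]

theorem HasFDerivAt.sq {E : Type*} [NormedAddCommGroup E] [NormedSpace ℝ E] {f : E → ℝ}
    {f' : E →L[ℝ] ℝ} {x : E} (hf : HasFDerivAt f f' x) :
    HasFDerivAt (fun y => f y ^ 2) ((2 * f x) • f') x := by
  simpa using hf.pow 2

noncomputable def normalizedDiffCLM {N d : ℕ} (deg : Fin N → ℝ) (i j : Fin N) (k : Fin d) :
    Matrix (Fin N) (Fin d) ℝ →L[ℝ] ℝ :=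
  LinearMap.toContinuousLinearMap
    { toFun := fun F => F i k / Real.sqrt (deg i) - F j k / Real.sqrt (deg j)
      map_add' := fun _ _ => by simp only [Matrix.add_apply]; ring
      map_smul' := fun _ _ => by
        simp only [Matrix.smul_apply, smul_eq_mul, RingHom.id_apply]; ring }

@[simp]
theorem normalizedDiffCLM_apply {N d : ℕ} (deg : Fin N → ℝ) (i j : Fin N) (k : Fin d)
    (F : Matrix (Fin N) (Fin d) ℝ) :
    normalizedDiffCLM deg i j k F = F i k / Real.sqrt (deg i) - F j k / Real.sqrt (deg j) := rfl

theorem hasFDerivAt_adaUgnnObjective {N d : ℕ} (G : SimpleGraph (Fin N)) [DecidableRel G.Adj]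
    (deg : Fin N → ℝ) (S : Matrix (Fin N) (Fin d) ℝ) (C : Fin N → ℝ)
    (F : Matrix (Fin N) (Fin d) ℝ) :
    HasFDerivAt (adaUgnnObjective G deg S C)
      ((∑ i, ∑ k, (2 * (F i k - S i k)) • (Matrix.entryLinearMap ℝ ℝ i k).toContinuousLinearMap) +
        (1 / 2 : ℝ) • ∑ i, C i • ∑ j ∈ insert i (G.neighborFinset i), ∑ k,
          (2 * normalizedDiffCLM deg i j k F) • normalizedDiffCLM deg i j k) F := by
  have hentry : ∀ i k, HasFDerivAt (fun F : Matrix (Fin N) (Fin d) ℝ => F i k)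
      (Matrix.entryLinearMap ℝ ℝ i k).toContinuousLinearMap F := fun i k =>
    (Matrix.entryLinearMap ℝ ℝ i k).toContinuousLinearMap.hasFDerivAt
  exact (HasFDerivAt.fun_sum fun i _ => HasFDerivAt.fun_sum fun k _ =>
      ((hentry i k).sub_const (S i k)).sq).add
    ((HasFDerivAt.fun_sum fun i _ => (HasFDerivAt.fun_sum fun j _ => HasFDerivAt.fun_sum
      fun k _ => (normalizedDiffCLM deg i j k).hasFDerivAt.sq).const_mul (C i)).const_mul (1 / 2))

theorem stmt_16_general {N d : ℕ} (G : SimpleGraph (Fin N)) [DecidableRel G.Adj]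
    (deg : Fin N → ℝ)
    (S : Matrix (Fin N) (Fin d) ℝ) (C : Fin N → ℝ)
    (F : Matrix (Fin N) (Fin d) ℝ) :
    HasFDerivAt (adaUgnnObjective G deg S C)
      (frobInner (fun i k =>
        2 * (F i k - S i k) +
          ∑ j ∈ insert i (G.neighborFinset i),
            ((C i + C j) / Real.sqrt (deg i)) *
              (F i k / Real.sqrt (deg i) - F j k / Real.sqrt (deg j)))) F := by
  refine (hasFDerivAt_adaUgnnObjective G deg S C F).congr_fderiv
    (ContinuousLinearMap.ext fun H => ?_)
  have hsmooth := sum_mul_sum_sub_mul_sub_eq_of_symm (fun i => insert i (G.neighborFinset i))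
    (fun _ _ => G.mem_insert_neighborFinset_comm) C (fun i k => F i k / Real.sqrt (deg i))
    (fun i k => H i k / Real.sqrt (deg i))
  refine Eq.trans ?_ (frobInner_apply _ H).symm
  simp only [_root_.add_apply, _root_.smul_apply, FunLike.coe_sum, Finset.sum_apply, smul_eq_mul,
    normalizedDiffCLM_apply, LinearMap.coe_toContinuousLinearMap', Matrix.entryLinearMap_apply]
    at hsmooth ⊢
  have hhalf : (1 / 2 : ℝ) * ∑ i, C i * ∑ j ∈ insert i (G.neighborFinset i), ∑ k,
      2 * (F i k / √(deg i) - F j k / √(deg j)) * (H i k / √(deg i) - H j k / √(deg j)) =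
      ∑ i, C i * ∑ j ∈ insert i (G.neighborFinset i), ∑ k,
        (F i k / √(deg i) - F j k / √(deg j)) * (H i k / √(deg i) - H j k / √(deg j)) := by
    simp only [Finset.mul_sum]
    ring_nf
  rw [hhalf, hsmooth, ← Finset.sum_add_distrib]
  refine Finset.sum_congr rfl fun i _ => ?_
  rw [← Finset.sum_add_distrib]
  refine Finset.sum_congr rfl fun k _ => ?_
  simp only [add_mul, Finset.sum_mul]
  congr 1
  exact Finset.sum_congr rfl fun j _ => by ring

/-- The degree-normalized adaptive objective
`𝓛(F) = Σ_i ‖F_i − S_i‖₂² + (1/2)·Σ_i 𝒞_i·Σ_{j∈Ñ(i)} ‖F_i/√d_i − F_j/√d_j‖₂²`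
(with degrees `d_i > 0`) is differentiable, and w.r.t. the Frobenius inner product
the `i`-th row of its gradient at `F` is
`2(F_i − S_i) + Σ_{j∈Ñ(i)} ((𝒞_i + 𝒞_j)/√d_i)·(F_i/√d_i − F_j/√d_j)`. -/
theorem stmt_16 {N d : ℕ} (G : SimpleGraph (Fin N)) [DecidableRel G.Adj]
    (deg : Fin N → ℝ) (hdeg : ∀ i, 0 < deg i)
    (S : Matrix (Fin N) (Fin d) ℝ) (C : Fin N → ℝ)
    (F : Matrix (Fin N) (Fin d) ℝ) :
    HasFDerivAt (adaUgnnObjective G deg S C)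
      (frobInner (fun i k =>
        2 * (F i k - S i k) +
          ∑ j ∈ insert i (G.neighborFinset i),
            ((C i + C j) / Real.sqrt (deg i)) *
              (F i k / Real.sqrt (deg i) - F j k / Real.sqrt (deg j)))) F :=
  stmt_16_general G deg S C F
end

section
/- Let G be a finite simple undirected graph on nodes {1,…,N} with self-inclusive neighborhoods Ñ(i), degrees d_1,…,d_N > 0, noisy signal S ∈ ℝ^{N×d}, and smoothness factors 𝒞_1,…,𝒞_N > 0. For each node i set the adaptive stepsize b_i = 1 / (2 + Σ_{j∈Ñ(i)} (𝒞_i + 𝒞_j)/d_i). Then the per-node gradient descent update of the degree-normalized adaptive objective 𝓛(F) = Σ_i ‖F_i − S_i‖₂² + (1/2)·Σ_i 𝒞_i·Σ_{j∈Ñ(i)} ‖F_i/√d_i − F_j/√d_j‖₂², namely F_i^{(k)} = F_i^{(k−1)} − b_i·(∂𝓛/∂F_i)|_{F=F^{(k−1)}}, equals F_i^{(k)} = 2b_i·S_i + b_i·Σ_{j∈Ñ(i)} (𝒞_i + 𝒞_j)·F_j^{(k−1)}/√(d_i d_j). -/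
open BigOperators

/-- For the degree-normalized adaptive (Ada-UGNN) objective
`𝓛(F) = Σ_i ‖F_i − S_i‖₂² + (1/2)·Σ_i 𝒞_i·Σ_{j∈Ñ(i)} ‖F_i/√d_i − F_j/√d_j‖₂²`
with degrees `d_i > 0`, smoothness factors `𝒞_i > 0`, and adaptive stepsizes
`b_i = 1/(2 + Σ_{j∈Ñ(i)} (𝒞_i + 𝒞_j)/d_i)`, the per-node gradient descent update
`F_i⁽ᵏ⁾ = F_i⁽ᵏ⁻¹⁾ − b_i·(∂𝓛/∂F_i)|_{F=F⁽ᵏ⁻¹⁾}`, where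
`∂𝓛/∂F_i = 2(F_i − S_i) + Σ_{j∈Ñ(i)} ((𝒞_i + 𝒞_j)/√d_i)(F_i/√d_i − F_j/√d_j)`,
equals `F_i⁽ᵏ⁾ = 2b_i·S_i + b_i·Σ_{j∈Ñ(i)} (𝒞_i + 𝒞_j)·F_j⁽ᵏ⁻¹⁾/√(d_i d_j)`:
the coefficient of `F_i⁽ᵏ⁻¹⁾` vanishes exactly by the choice of stepsize. -/
theorem stmt_17 {N d : ℕ} (G : SimpleGraph (Fin N)) [DecidableRel G.Adj]
    (deg : Fin N → ℝ) (hdeg : ∀ i, 0 < deg i)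
    (S : Matrix (Fin N) (Fin d) ℝ)
    (C : Fin N → ℝ) (hC : ∀ i, 0 < C i)
    (b : Fin N → ℝ)
    (hb : ∀ i, b i = 1 / (2 + ∑ j ∈ insert i (G.neighborFinset i), (C i + C j) / deg i)) :
    ∀ (Fprev : Matrix (Fin N) (Fin d) ℝ) (i : Fin N) (k : Fin d),
      Fprev i k - b i * (2 * (Fprev i k - S i k) +
          ∑ j ∈ insert i (G.neighborFinset i),
            ((C i + C j) / Real.sqrt (deg i)) *
              (Fprev i k / Real.sqrt (deg i) - Fprev j k / Real.sqrt (deg j)))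
        = 2 * b i * S i k +
          b i * ∑ j ∈ insert i (G.neighborFinset i),
            (C i + C j) * Fprev j k / Real.sqrt (deg i * deg j) := by
  intro Fprev i k
  have hsi : (0:ℝ) < Real.sqrt (deg i) := Real.sqrt_pos.mpr (hdeg i)
  have h2 : Real.sqrt (deg i) ^ 2 = deg i := Real.sq_sqrt (hdeg i).le
  have hterm : ∀ j, ((C i + C j) / Real.sqrt (deg i)) *
      (Fprev i k / Real.sqrt (deg i) - Fprev j k / Real.sqrt (deg j))
      = (C i + C j) / deg i * Fprev i k
        - (C i + C j) * Fprev j k / Real.sqrt (deg i * deg j) := by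
    intro j
    have hsj : (0:ℝ) < Real.sqrt (deg j) := Real.sqrt_pos.mpr (hdeg j)
    rw [mul_sub, div_mul_div_comm, div_mul_div_comm,
      Real.mul_self_sqrt (hdeg i).le, ← Real.sqrt_mul (hdeg i).le]
    ring
  rw [Finset.sum_congr rfl fun j _ => hterm j, Finset.sum_sub_distrib, ← Finset.sum_mul]
  have hden : 0 < 2 + ∑ j ∈ insert i (G.neighborFinset i), (C i + C j) / deg i := by
    have : 0 ≤ ∑ j ∈ insert i (G.neighborFinset i), (C i + C j) / deg i :=
      Finset.sum_nonneg fun j _ => div_nonneg (by linarith [hC i, hC j]) (hdeg i).le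
    linarith
  have hbi : b i * (2 + ∑ j ∈ insert i (G.neighborFinset i), (C i + C j) / deg i) = 1 := by
    rw [hb i, one_div, inv_mul_cancel₀ hden.ne']
  linear_combination (-(Fprev i k)) * hbi
end
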